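/- Let C be a real symmetric n×n matrix. Over rank-k orthogonal projections P (P² = P, P^T = P, tr P = k), the quantity tr(P C) is maximized when the range of P is spanned by eigenvectors of C corresponding to its k largest eigenvalues, and the maximum value equals the sum of the k largest eigenvalues of C. -/
import Mathlib


open Matrix Filter

noncomputable def frobSq {m n : ℕ} (A : Matrix (Fin m) (Fin n) ℝ) : ℝ := ∑ i, ∑ j, (A i j)^2

noncomputable def frobNorm {m n : ℕ} (A : Matrix (Fin m) (Fin n) ℝ) : ℝ := Real.sqrt (frobSq A)

noncomputable def opNorm {m n : ℕ} (A : Matrix (Fin m) (Fin n) ℝ) : ℝ :=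
  ‖(Matrix.toEuclideanLin.trans LinearMap.toContinuousLinearMap) A‖

private lemma sandwich_mul {n : ℕ} (U A B : Matrix (Fin n) (Fin n) ℝ)
    (h : star U * U = 1) :
    U * A * star U * (U * B * star U) = U * (A * B) * star U := by
  simp only [Matrix.mul_assoc]
  rw [← Matrix.mul_assoc (star U) U (B * star U), h, Matrix.one_mul]

private lemma ky_fan_key {n : ℕ} (lam d : Fin n → ℝ) (s : Finset (Fin n))
    (hd0 : ∀ i, 0 ≤ d i) (hd1 : ∀ i, d i ≤ 1)
    (hsum : ∑ i, d i = (s.card : ℝ))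
    (hthr : ∀ i ∈ s, ∀ j ∉ s, lam j ≤ lam i) :
    ∑ i, d i * lam i ≤ ∑ i ∈ s, lam i := by
  rcases s.eq_empty_or_nonempty with rfl | hne
  · have h0 : ∀ i ∈ Finset.univ, d i = 0 := by
      rw [← Finset.sum_eq_zero_iff_of_nonneg (fun i _ => hd0 i)]
      simpa using hsum
    have : ∑ i, d i * lam i = 0 :=
      Finset.sum_eq_zero fun i hi => by rw [h0 i hi, zero_mul]
    simp [this]
  · set c := s.inf' hne lam with hc
    have h1 : ∀ i ∈ s, c ≤ lam i := fun i hi => Finset.inf'_le _ hi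
    have h2 : ∀ j ∉ s, lam j ≤ c := by
      obtain ⟨i0, hi0, hic⟩ := Finset.exists_mem_eq_inf' hne lam
      intro j hj
      rw [hc, hic]
      exact hthr i0 hi0 j hj
    have split : ∑ i, d i * lam i = ∑ i, d i * (lam i - c) + c * (s.card : ℝ) := by
      rw [← hsum, Finset.mul_sum, ← Finset.sum_add_distrib]
      exact Finset.sum_congr rfl fun i _ => by ring
    have hbound : ∑ i, d i * (lam i - c) ≤ ∑ i ∈ s, (lam i - c) := by
      rw [← Finset.sum_add_sum_compl s (fun i => d i * (lam i - c))]
      have hA : ∑ i ∈ s, d i * (lam i - c) ≤ ∑ i ∈ s, (lam i - c) :=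
        Finset.sum_le_sum fun i hi =>
          mul_le_of_le_one_left (by linarith [h1 i hi]) (hd1 i)
      have hB : ∑ i ∈ sᶜ, d i * (lam i - c) ≤ 0 :=
        Finset.sum_nonpos fun i hi =>
          mul_nonpos_of_nonneg_of_nonpos (hd0 i)
            (by linarith [h2 i (Finset.mem_compl.mp hi)])
      linarith
    have final : ∑ i ∈ s, (lam i - c) + c * (s.card : ℝ) = ∑ i ∈ s, lam i := by
      rw [Finset.sum_sub_distrib, Finset.sum_const, nsmul_eq_mul]
      ring
    linarith [split, hbound, final]

/-- Ky Fan variational characterization — over rank-k orthogonal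
projections, tr(P C) is maximized at the sum of the k largest eigenvalues of C,
attained by a projection onto top eigenvectors. -/
theorem ky_fan_trace_maximization {n : ℕ}
    (C : Matrix (Fin n) (Fin n) ℝ) (hC : C.IsHermitian) (k : ℕ) (hk : k ≤ n) :
    ∃ s : Finset (Fin n), s.card = k ∧
      (∀ t : Finset (Fin n), t.card = k →
        ∑ i ∈ t, hC.eigenvalues i ≤ ∑ i ∈ s, hC.eigenvalues i) ∧
      IsGreatest {x : ℝ | ∃ P : Matrix (Fin n) (Fin n) ℝ,
          P * P = P ∧ Pᵀ = P ∧ P.trace = (k : ℝ) ∧ x = (P * C).trace}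
        (∑ i ∈ s, hC.eigenvalues i) := by
  classical
  set lam := hC.eigenvalues with hlam
  have hne : (Finset.univ.powersetCard k (α := Fin n)).Nonempty := by
    rw [Finset.powersetCard_nonempty]
    simpa using hk
  obtain ⟨s, hs_mem, hs_max⟩ :=
    Finset.exists_max_image (Finset.univ.powersetCard k) (fun t => ∑ i ∈ t, lam i) hne
  have hs_card : s.card = k := (Finset.mem_powersetCard_univ.mp hs_mem)
  have hmax : ∀ t : Finset (Fin n), t.card = k → ∑ i ∈ t, lam i ≤ ∑ i ∈ s, lam i :=
    fun t ht => hs_max t (Finset.mem_powersetCard_univ.mpr ht)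
  have hthr : ∀ i ∈ s, ∀ j ∉ s, lam j ≤ lam i := by
    intro i hi j hj
    have hje : j ∉ s.erase i := fun h => hj (Finset.mem_of_mem_erase h)
    have hcard : (insert j (s.erase i)).card = k := by
      rw [Finset.card_insert_of_notMem hje, Finset.card_erase_add_one hi, hs_card]
    have := hmax _ hcard
    rw [Finset.sum_insert hje, ← Finset.add_sum_erase _ lam hi] at this
    linarith
  set U := (hC.eigenvectorUnitary : Matrix (Fin n) (Fin n) ℝ) with hU
  have hUstar : star U * U = 1 := by
    rw [hU]; exact Unitary.coe_star_mul_self _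
  have hUstar' : U * star U = 1 := by
    rw [hU]; exact Unitary.coe_mul_star_self _
  have hUT : star U = Uᵀ := by
    rw [Matrix.star_eq_conjTranspose, Matrix.conjTranspose_eq_transpose_of_trivial]
  have hspec : C = U * Matrix.diagonal lam * star U := by
    have := hC.spectral_theorem
    simpa [RCLike.ofReal_real_eq_id] using this
  refine ⟨s, hs_card, hmax, ?_, ?_⟩
  · -- membership: construct the projection
    set D : Matrix (Fin n) (Fin n) ℝ :=
      Matrix.diagonal (fun i => if i ∈ s then (1 : ℝ) else 0) with hD
    have hDD : D * D = D := by
      rw [hD, Matrix.diagonal_mul_diagonal]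
      have : (fun i => (if i ∈ s then (1:ℝ) else 0) * (if i ∈ s then (1:ℝ) else 0))
          = fun i => if i ∈ s then (1:ℝ) else 0 := by
        funext i; by_cases h : i ∈ s <;> simp [h]
      rw [this]
    have hDt : Dᵀ = D := Matrix.diagonal_transpose _
    refine ⟨U * D * star U, ?_, ?_, ?_, ?_⟩
    · rw [sandwich_mul U D D hUstar, hDD]
    · rw [hUT, Matrix.transpose_mul, Matrix.transpose_mul, Matrix.transpose_transpose,
        hDt, Matrix.mul_assoc]
    · rw [Matrix.trace_mul_cycle, hUstar, Matrix.one_mul, hD, Matrix.trace_diagonal]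
      rw [Finset.sum_ite_mem, Finset.univ_inter, Finset.sum_const, hs_card]
      simp
    · symm
      rw [hspec, sandwich_mul U D (Matrix.diagonal lam) hUstar,
        Matrix.trace_mul_cycle, hUstar, Matrix.one_mul, hD,
        Matrix.diagonal_mul_diagonal, Matrix.trace_diagonal]
      simp [ite_mul, Finset.sum_ite_mem]
  · -- upper bound
    rintro x ⟨P, hP2, hPt, hPtr, rfl⟩
    set Q := star U * P * U with hQ
    have hPs : star P = P := by
      rw [Matrix.star_eq_conjTranspose, Matrix.conjTranspose_eq_transpose_of_trivial, hPt]
    have hQs : star Q = Q := by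
      rw [hQ]
      simp only [StarMul.star_mul, star_star, hPs, Matrix.mul_assoc]
    have hQ2 : Q * Q = Q := by
      have h' : Q = star U * P * star (star U) := by rw [star_star]
      rw [h', sandwich_mul (star U) P P (by rw [star_star]; exact hUstar'), hP2]
    have hdiag : ∀ i, Q i i = ∑ j, (Q i j)^2 := by
      intro i
      conv_lhs => rw [← hQ2]
      rw [Matrix.mul_apply]
      refine Finset.sum_congr rfl fun j _ => ?_
      have : Q j i = Q i j := by
        have := congrFun (congrFun hQs i) j
        simpa [Matrix.star_apply] using this
      rw [this]; ring
    have hd0 : ∀ i, 0 ≤ Q i i := fun i => by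
      rw [hdiag i]; exact Finset.sum_nonneg fun j _ => sq_nonneg _
    have hd1 : ∀ i, Q i i ≤ 1 := by
      intro i
      have hle : (Q i i)^2 ≤ Q i i := by
        conv_rhs => rw [hdiag i]
        exact Finset.single_le_sum (fun j _ => sq_nonneg (Q i j)) (Finset.mem_univ i)
      nlinarith [hd0 i]
    have hdsum : ∑ i, Q i i = (s.card : ℝ) := by
      have h1 : Q.trace = P.trace := by
        rw [hQ, Matrix.trace_mul_cycle, hUstar', Matrix.one_mul]
      have h2 := h1.trans hPtr
      rw [hs_card]
      simpa [Matrix.trace, Matrix.diag] using h2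
    have htr : (P * C).trace = ∑ i, Q i i * lam i := by
      rw [hspec]
      have e1 : P * (U * Matrix.diagonal lam * star U)
          = P * U * Matrix.diagonal lam * star U := by
        simp only [Matrix.mul_assoc]
      rw [e1, Matrix.trace_mul_cycle, ← Matrix.mul_assoc, ← hQ]
      simp [Matrix.trace, Matrix.diag, Matrix.mul_diagonal]
    rw [htr]
    exact ky_fan_key lam (fun i => Q i i) s hd0 hd1 hdsum hthr
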